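/- Define a loop-detour reduction on ascending Gauss codes: given an ascending code w with labels ordered by first appearance, let u be the label whose second occurrence is earliest and v the label whose first occurrence immediately precedes that second occurrence (v ≥ u); delete from w all occurrences of the labels u, u+1, …, v. Then the resulting code is again an ascending Gauss code (each remaining label appears exactly twice, first with -1 then with +1), and it has strictly fewer labels. Consequently, iterating this reduction from any ascending Gauss code terminates in the empty code after at most n steps, where n is the number of labels. -/

import Mathlib

/-!
Let `i` be the earliest position holding a second occurrence, of the label `u`, and let `v` be
the label at position `i - 1`. By minimality of `i` the labels before position `i` are pairwise
distinct, so if `u ≠ v` then `u` first occurs before position `i - 1`, which is the first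
occurrence of `v`; since labels increase in order of first appearance, `u < v`. Hence the
reduction deletes at least the label `u`. Deleting whole labels keeps a code ascending and
numbered, and every nonempty ascending code can be reduced because its last letter is a second
occurrence, so iterating the reduction reaches the empty code within as many steps as there are
labels.
-/

abbrev GaussCode (α : Type) : Type := List (α × ℤ)

/-- Ascending: every label occurs first with sign `-1` and second with sign `+1`. -/
def IsAscending {α : Type} [DecidableEq α] (w : GaussCode α) : Prop :=
  ∀ x ∈ w.map Prod.fst, w.filter (fun p => decide (p.1 = x)) = [(x, -1), (x, 1)]

/-- The list of labels in order of first appearance. -/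
def firstOccs {α : Type} [DecidableEq α] : List α → List α
  | [] => []
  | a :: l => a :: firstOccs (l.filter (fun b => decide (b ≠ a)))
  termination_by l => l.length
  decreasing_by simpa using Nat.lt_succ_of_le ((List.length_filter_le _ _).trans_eq List.length_attach)

/-- Labels are ordered (increasing) by first appearance. -/
def Numbered (w : GaussCode ℕ) : Prop :=
  List.Chain' (· < ·) (firstOccs (w.map Prod.fst))

/-- The number of distinct labels of a code. -/
def numLabels (w : GaussCode ℕ) : ℕ := (firstOccs (w.map Prod.fst)).length

/-- Position `i` of the code is a second occurrence of its label. -/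
def isSecondOcc (w : GaussCode ℕ) (i : ℕ) : Prop :=
  ∃ p, w[i]? = some p ∧ ((w.take i).map Prod.fst).count p.1 = 1

/-- The loop-detour reduction: let `u` be the label whose second occurrence is
earliest (at position `i`) and `v` the label immediately preceding that second
occurrence; delete all occurrences of the labels `u, u+1, …, v`. -/
def Reduces (w w' : GaussCode ℕ) : Prop :=
  ∃ (i u v : ℕ) (s s' : ℤ),
    isSecondOcc w i ∧ (∀ j < i, ¬ isSecondOcc w j) ∧
    w[i]? = some (u, s) ∧ w[i - 1]? = some (v, s') ∧
    w' = w.filter (fun p => decide (p.1 < u ∨ v < p.1))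

section FirstOccs

variable {α : Type} [DecidableEq α]

@[simp]
theorem mem_firstOccs {x : α} {l : List α} : x ∈ firstOccs l ↔ x ∈ l := by
  match l with
  | [] => simp [firstOccs]
  | a :: t =>
    have ih := @mem_firstOccs x (t.filter (· ≠ a))
    by_cases hx : x = a <;> simp_all [firstOccs]
  termination_by l.length
  decreasing_by simpa using Nat.lt_succ_of_le (List.length_filter_le _ t)

theorem firstOccs_filter (q : α → Bool) (l : List α) :
    firstOccs (l.filter q) = (firstOccs l).filter q := by
  match l with
  | [] => simp [firstOccs]
  | a :: t =>
    have ih := firstOccs_filter q (t.filter (· ≠ a))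
    have hcomm : (t.filter q).filter (· ≠ a) = (t.filter (· ≠ a)).filter q := by
      simp only [List.filter_filter, Bool.and_comm]
    by_cases hq : q a
    · rw [List.filter_cons_of_pos hq, firstOccs, firstOccs, List.filter_cons_of_pos hq, hcomm, ih]
    · rw [List.filter_cons_of_neg hq, firstOccs, List.filter_cons_of_neg hq, ← ih, ← hcomm]
      -- `a` is filtered out by `q` anyway, so the extra filter `· ≠ a` is harmless
      congr 1
      rw [List.filter_filter]
      refine List.filter_congr fun b _ => ?_
      by_cases hb : b = a <;> simp [hb, hq]
  termination_by l.length
  decreasing_by simpa using Nat.lt_succ_of_le (List.length_filter_le _ t)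

theorem List.IsPrefix.firstOccs {l₁ l₂ : List α} (h : l₁ <+: l₂) :
    firstOccs l₁ <+: firstOccs l₂ := by
  match l₁, l₂ with
  | [], _ => simp [_root_.firstOccs]
  | _ :: _, [] => simp at h
  | a :: t₁, b :: t₂ =>
    obtain ⟨rfl, h'⟩ := List.cons_prefix_cons.mp h
    rw [_root_.firstOccs, _root_.firstOccs]
    exact List.cons_prefix_cons.mpr ⟨rfl, (h'.filter _).firstOccs⟩
  termination_by l₂.length
  decreasing_by simpa using Nat.lt_succ_of_le (List.length_filter_le _ t₂)

theorem lt_of_mem_take_of_notMem_take [Preorder α] {l : List α}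
    (hl : (firstOccs l).IsChain (· < ·)) {k : ℕ} {x y : α}
    (hx : x ∈ l.take k) (hy : y ∈ l) (hy' : y ∉ l.take k) : x < y := by
  obtain ⟨t, ht⟩ := (l.take_prefix k).firstOccs
  have hpw := List.isChain_iff_pairwise.mp hl
  rw [← ht] at hpw
  have hyt : y ∈ t := by
    have : y ∈ firstOccs l := mem_firstOccs.mpr hy
    rw [← ht, List.mem_append, mem_firstOccs] at this
    exact this.resolve_left hy'
  exact (List.pairwise_append.mp hpw).2.2 x (mem_firstOccs.mpr hx) y hyt

end FirstOccs

theorem map_fst_filter_fst {α : Type} (q : α → Bool) (w : GaussCode α) :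
    (w.filter fun p => q p.1).map Prod.fst = (w.map Prod.fst).filter q :=
  List.filter_map.symm

section GaussCode

variable {α : Type} [DecidableEq α]

theorem IsAscending.count_eq_two {w : GaussCode α} (hw : IsAscending w) {x : α}
    (hx : x ∈ w.map Prod.fst) : (w.map Prod.fst).count x = 2 := by
  rw [List.count_eq_countP, List.countP_map, List.countP_eq_length_filter]
  exact congrArg List.length (hw x hx)

theorem IsAscending.filter_fst {w : GaussCode α} (hw : IsAscending w) (q : α → Bool) :
    IsAscending (w.filter fun p => q p.1) := by
  intro x hx
  rw [map_fst_filter_fst, List.mem_filter] at hx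
  rw [List.filter_filter, ← hw x hx.1]
  refine List.filter_congr fun p _ => ?_
  by_cases hpx : p.1 = x <;> simp [hpx, hx.2]

end GaussCode

theorem Numbered.filter_fst {w : GaussCode ℕ} (hw : Numbered w) (q : ℕ → Bool) :
    Numbered (w.filter fun p => q p.1) := by
  rw [Numbered, map_fst_filter_fst, firstOccs_filter]
  exact List.isChain_iff_pairwise.mpr <| (List.isChain_iff_pairwise.mp hw).filter q

theorem numLabels_filter_fst_lt {w : GaussCode ℕ} {q : ℕ → Bool} {x : ℕ}
    (hx : x ∈ w.map Prod.fst) (hqx : q x = false) :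
    numLabels (w.filter fun p => q p.1) < numLabels w := by
  rw [numLabels, numLabels, map_fst_filter_fst, firstOccs_filter]
  exact List.length_filter_lt_length_iff_exists.mpr ⟨x, mem_firstOccs.mpr hx, by simp [hqx]⟩

theorem not_isSecondOcc_zero (w : GaussCode ℕ) : ¬ isSecondOcc w 0 := by
  simp [isSecondOcc]

theorem nodup_take_of_forall_lt_not_isSecondOcc {w : GaussCode ℕ} {i : ℕ}
    (h : ∀ j < i, ¬ isSecondOcc w j) : ((w.map Prod.fst).take i).Nodup := by
  induction i with
  | zero => simp
  | succ i ih =>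
    have hnodup := ih fun j hj => h j (by omega)
    rw [List.take_add_one]
    rcases hwi : w[i]? with _ | p
    · simpa [hwi] using hnodup
    · simp only [List.getElem?_map, hwi, Option.map_some, Option.toList_some,
        List.nodup_append, List.nodup_singleton, List.mem_singleton]
      refine ⟨hnodup, trivial, ?_⟩
      rintro x hx _ rfl rfl
      refine h i (by omega) ⟨p, hwi, ?_⟩
      rw [List.map_take]
      exact List.count_eq_one_of_mem hnodup hx

theorem le_of_first_isSecondOcc {w : GaussCode ℕ} (hw : Numbered w) {i u v : ℕ} {s s' : ℤ}
    (hsec : isSecondOcc w i) (hmin : ∀ j < i, ¬ isSecondOcc w j)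
    (hu : w[i]? = some (u, s)) (hv : w[i - 1]? = some (v, s')) : u ≤ v := by
  obtain ⟨p, hp, hcount⟩ := hsec
  obtain rfl : p = (u, s) := Option.some_inj.mp (hp.symm.trans hu)
  simp only [List.map_take] at hcount
  obtain ⟨k, rfl⟩ : ∃ k, i = k + 1 :=
    Nat.exists_eq_add_one_of_ne_zero (by rintro rfl; simp at hcount)
  set W := w.map Prod.fst
  have hWv : W[k]? = some v := by simpa [W] using congrArg (Option.map Prod.fst) hv
  have htake : W.take (k + 1) = W.take k ++ [v] := by rw [List.take_add_one, hWv]; rfl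
  rcases eq_or_ne u v with rfl | huv
  · exact le_rfl
  have hu' : u ∈ W.take k := by
    have : u ∈ W.take (k + 1) := List.count_pos_iff.mp (by omega)
    simpa [htake, huv] using this
  have hv' : v ∉ W.take k := by
    have := nodup_take_of_forall_lt_not_isSecondOcc hmin
    rw [htake, List.nodup_append] at this
    exact fun hv => this.2.2 v hv v (List.mem_singleton_self v) rfl
  exact (lt_of_mem_take_of_notMem_take hw hu' (List.mem_of_getElem? hWv) hv').le

theorem IsAscending.isSecondOcc_length_sub_one {w : GaussCode ℕ} (hw : IsAscending w)
    (hne : w ≠ []) : isSecondOcc w (w.length - 1) := by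
  obtain ⟨L, b, rfl⟩ := (List.eq_nil_or_concat w).resolve_left hne
  have h2 := hw.count_eq_two (x := b.1) (by simp)
  refine ⟨b, by simp, ?_⟩
  simpa using h2

theorem IsAscending.exists_reduces {w : GaussCode ℕ} (hw : IsAscending w) (hne : w ≠ []) :
    ∃ w', Reduces w w' := by
  classical
  have hex : ∃ i, isSecondOcc w i := ⟨_, hw.isSecondOcc_length_sub_one hne⟩
  have hsec := Nat.find_spec hex
  have hi : Nat.find hex ≠ 0 := fun h => not_isSecondOcc_zero w (h ▸ hsec)
  obtain ⟨p, hp, -⟩ := hsec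
  have hlt : Nat.find hex - 1 < w.length := by
    have := (List.getElem?_eq_some_iff.mp hp).1
    omega
  exact ⟨_, Nat.find hex, p.1, w[Nat.find hex - 1].1, p.2, w[Nat.find hex - 1].2,
    Nat.find_spec hex, fun _ => Nat.find_min hex, hp, List.getElem?_eq_getElem hlt, rfl⟩

theorem Reduces.isAscending {w w' : GaussCode ℕ} (h : Reduces w w') (hw : IsAscending w) :
    IsAscending w' := by
  obtain ⟨-, u, v, -, -, -, -, -, -, rfl⟩ := h
  exact hw.filter_fst fun x => decide (x < u ∨ v < x)

theorem Reduces.numbered {w w' : GaussCode ℕ} (h : Reduces w w') (hw : Numbered w) :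
    Numbered w' := by
  obtain ⟨-, u, v, -, -, -, -, -, -, rfl⟩ := h
  exact hw.filter_fst fun x => decide (x < u ∨ v < x)

theorem Reduces.numLabels_lt {w w' : GaussCode ℕ} (h : Reduces w w') (hw : Numbered w) :
    numLabels w' < numLabels w := by
  obtain ⟨i, u, v, s, s', hsec, hmin, hu, hv, rfl⟩ := h
  have huv := le_of_first_isSecondOcc hw hsec hmin hu hv
  have huW : u ∈ w.map Prod.fst :=
    List.mem_of_getElem? (by simpa using congrArg (Option.map Prod.fst) hu)
  exact numLabels_filter_fst_lt (q := fun x => decide (x < u ∨ v < x)) huW (by simpa using huv)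

theorem exists_reduces_chain_to_nil {w : GaussCode ℕ} (hasc : IsAscending w)
    (hnum : Numbered w) :
    ∃ (k : ℕ) (seq : ℕ → GaussCode ℕ), k ≤ numLabels w ∧ seq 0 = w ∧ seq k = [] ∧
      ∀ j < k, Reduces (seq j) (seq (j + 1)) := by
  by_cases hne : w = []
  · exact ⟨0, fun _ => [], Nat.zero_le _, hne.symm, rfl, by simp⟩
  obtain ⟨w', hred⟩ := hasc.exists_reduces hne
  have hlt := hred.numLabels_lt hnum
  obtain ⟨k, seq, hk, h0, hk', hseq⟩ :=
    exists_reduces_chain_to_nil (hred.isAscending hasc) (hred.numbered hnum)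
  refine ⟨k + 1, fun | 0 => w | j + 1 => seq j, by omega, rfl, hk', ?_⟩
  rintro (_ | j) hj
  · simpa [h0] using hred
  · exact hseq j (by omega)
termination_by numLabels w

/-- the loop-detour reduction of an ascending Gauss code is again an
ascending Gauss code with strictly fewer labels; consequently iterating the
reduction from any ascending Gauss code with `n` labels terminates in the empty
code after at most `n` steps. -/
theorem loop_detour_reduction :
    (∀ w w' : GaussCode ℕ, IsAscending w → Numbered w → Reduces w w' →
       IsAscending w' ∧ Numbered w' ∧ numLabels w' < numLabels w) ∧
    (∀ (w : GaussCode ℕ) (n : ℕ), IsAscending w → Numbered w → numLabels w = n →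
       ∃ (k : ℕ) (seq : ℕ → GaussCode ℕ), k ≤ n ∧ seq 0 = w ∧ seq k = [] ∧
         ∀ j < k, Reduces (seq j) (seq (j + 1))) :=
  ⟨fun _ _ hasc hnum h => ⟨h.isAscending hasc, h.numbered hnum, h.numLabels_lt hnum⟩,
    fun _ _ hasc hnum hn => hn ▸ exists_reduces_chain_to_nil hasc hnum⟩
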